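/- For every s ∈ ℂ with s ≠ 1, one has 2·Q(s, 1/6) = ((2^s − 1)(3^s − 1) + (2^{1−s} − 1)(3^{1−s} − 1)) · ζ(s), where ζ is the Riemann zeta function; more precisely, ζ(s,1/6) + ζ(s,5/6) = (2^s − 1)(3^s − 1)·ζ(s) and Li_s(e^{πi/3}) + Li_s(e^{5πi/3}) = (2^{1−s} − 1)(3^{1−s} − 1)·ζ(s). -/

import Mathlib

/-!
For `s ≠ 1` there are the distribution relations `∑_{j mod N} ζ(s, j/N) = N^s ζ(s)` (the term
`j = 0` standing for `ζ(s, 1) = ζ(s)`) and `∑_{j mod N} Li_s(e^{2πij/N}) = N^{1-s} ζ(s)`. Both come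
from the L-function of a function on `ℤ/N`: it is a combination of Hurwitz zeta values, while the
L-function of its discrete Fourier transform is the same combination of periodic zeta values, and
the constant `1` and the point mass at `0` are Fourier transforms of each other (up to `N`).
Since `1/6` and `5/6` are the residues prime to `6`, inclusion–exclusion over the divisors `2`
and `3` gives the sum over them as `(6^s - 3^s - 2^s + 1) ζ(s) = (2^s - 1)(3^s - 1) ζ(s)`, and
likewise with `1 - s` for the periodic zeta function.
-/

open Complex Real Set HurwitzZeta

/-- The quadrilateral zeta function `Q(s,a)`, defined by
`2Q(s,a) = ζ(s,a) + ζ(s,1-a) + Li_s(e^{2πia}) + Li_s(e^{2πi(1-a)})`. -/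
noncomputable def Q (a : ℝ) (s : ℂ) : ℂ :=
  (hurwitzZeta (a : UnitAddCircle) s + hurwitzZeta ((1 - a : ℝ) : UnitAddCircle) s
    + expZeta (a : UnitAddCircle) s + expZeta ((1 - a : ℝ) : UnitAddCircle) s) / 2

open Finset

namespace ZMod

variable {N : ℕ} [NeZero N] {s : ℂ}

lemma dft_single_zero : 𝓕 (Pi.single (0 : ZMod N) (1 : ℂ)) = 1 := by
  ext k
  simp [dft_apply, Pi.single_apply]

lemma dft_one : 𝓕 (1 : ZMod N → ℂ) = Pi.single 0 (N : ℂ) := by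
  ext j
  rw [← dft_single_zero, dft_dft]
  simp [Pi.single_apply]

lemma LFunction_one (hs : s ≠ 1) : LFunction (1 : ZMod N → ℂ) s = riemannZeta s := by
  rw [← dft_single_zero, LFunction_dft _ (Or.inr hs)]
  simp [Pi.single_apply, expZeta_zero]

theorem sum_hurwitzZeta_toAddCircle (hs : s ≠ 1) :
    ∑ j : ZMod N, hurwitzZeta (toAddCircle j) s = N ^ s * riemannZeta s := by
  have hN : (N : ℂ) ^ s ≠ 0 := by simp [NeZero.ne N]
  rw [← LFunction_one (N := N) hs, LFunction, cpow_neg]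
  field_simp
  simp

theorem sum_expZeta_toAddCircle (hs : s ≠ 1) :
    ∑ j : ZMod N, expZeta (toAddCircle j) s = N ^ (1 - s) * riemannZeta s := by
  have h := LFunction_dft (1 : ZMod N → ℂ) (Or.inr hs)
  rw [dft_one, LFunction] at h
  simp only [Pi.single_apply, Pi.one_apply, one_mul, ite_mul, zero_mul, sum_ite_eq', Finset.mem_univ,
    if_true, map_neg, map_zero, hurwitzZeta_zero] at h
  rw [Fintype.sum_equiv (.neg _) _ (fun j ↦ expZeta (-toAddCircle j) s) (fun j ↦ by simp), ← h,
    sub_eq_neg_add, cpow_add _ _ (by simp [NeZero.ne N]), cpow_one, mul_assoc]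

lemma sum_val_eq_sum_range {M : Type*} [AddCommMonoid M] (f : ℕ → M) :
    ∑ j : ZMod N, f j.val = ∑ i ∈ range N, f i := by
  obtain ⟨n, rfl⟩ := Nat.exists_eq_succ_of_ne_zero (NeZero.ne N)
  exact Fin.sum_univ_eq_sum_range f _

end ZMod

namespace HurwitzZeta

variable (N : ℕ) [NeZero N] {s : ℂ}

theorem sum_range_hurwitzZeta_div (hs : s ≠ 1) :
    ∑ j ∈ range N, hurwitzZeta ((j / N : ℝ) : UnitAddCircle) s = N ^ s * riemannZeta s := by
  rw [← ZMod.sum_val_eq_sum_range (fun j : ℕ ↦ hurwitzZeta ((j / N : ℝ) : UnitAddCircle) s),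
    ← ZMod.sum_hurwitzZeta_toAddCircle hs]
  simp only [ZMod.toAddCircle_apply]

theorem sum_range_expZeta_div (hs : s ≠ 1) :
    ∑ j ∈ range N, expZeta ((j / N : ℝ) : UnitAddCircle) s = N ^ (1 - s) * riemannZeta s := by
  rw [← ZMod.sum_val_eq_sum_range (fun j : ℕ ↦ expZeta ((j / N : ℝ) : UnitAddCircle) s),
    ← ZMod.sum_expZeta_toAddCircle hs]
  simp only [ZMod.toAddCircle_apply]

end HurwitzZeta

lemma six_cpow (s : ℂ) : (6 : ℂ) ^ s = 2 ^ s * 3 ^ s := by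
  convert natCast_mul_natCast_cpow 2 3 s using 1 <;> norm_num

lemma hurwitzZeta_one_sixth_add_five_sixths {s : ℂ} (hs : s ≠ 1) :
    hurwitzZeta ((1 / 6 : ℝ) : UnitAddCircle) s + hurwitzZeta ((5 / 6 : ℝ) : UnitAddCircle) s =
      ((2 : ℂ) ^ s - 1) * ((3 : ℂ) ^ s - 1) * riemannZeta s := by
  have h6 := sum_range_hurwitzZeta_div 6 hs
  have h3 := sum_range_hurwitzZeta_div 3 hs
  have h2 := sum_range_hurwitzZeta_div 2 hs
  simp only [sum_range_succ, sum_range_zero] at h6 h3 h2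
  norm_num at h6 h3 h2 ⊢
  linear_combination h6 - h3 - h2 + congrFun hurwitzZeta_zero s + riemannZeta s * six_cpow s

lemma expZeta_one_sixth_add_five_sixths {s : ℂ} (hs : s ≠ 1) :
    expZeta ((1 / 6 : ℝ) : UnitAddCircle) s + expZeta ((5 / 6 : ℝ) : UnitAddCircle) s =
      ((2 : ℂ) ^ (1 - s) - 1) * ((3 : ℂ) ^ (1 - s) - 1) * riemannZeta s := by
  have h6 := sum_range_expZeta_div 6 hs
  have h3 := sum_range_expZeta_div 3 hs
  have h2 := sum_range_expZeta_div 2 hs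
  simp only [sum_range_succ, sum_range_zero] at h6 h3 h2
  norm_num at h6 h3 h2 ⊢
  linear_combination h6 - h3 - h2 + congrFun expZeta_zero s + riemannZeta s * six_cpow (1 - s)

/-- For `s ≠ 1`: `2Q(s,1/6) = ((2^s-1)(3^s-1) + (2^{1-s}-1)(3^{1-s}-1)) ζ(s)`; more precisely
`ζ(s,1/6) + ζ(s,5/6) = (2^s-1)(3^s-1) ζ(s)` and
`Li_s(e^{πi/3}) + Li_s(e^{5πi/3}) = (2^{1-s}-1)(3^{1-s}-1) ζ(s)`. -/
theorem quadrilateral_zeta_one_sixth_factorization (s : ℂ) (hs : s ≠ 1) :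
    2 * Q (1 / 6) s =
      (((2 : ℂ) ^ s - 1) * ((3 : ℂ) ^ s - 1) +
        ((2 : ℂ) ^ (1 - s) - 1) * ((3 : ℂ) ^ (1 - s) - 1)) * riemannZeta s ∧
    hurwitzZeta ((1 / 6 : ℝ) : UnitAddCircle) s + hurwitzZeta ((5 / 6 : ℝ) : UnitAddCircle) s =
      ((2 : ℂ) ^ s - 1) * ((3 : ℂ) ^ s - 1) * riemannZeta s ∧
    expZeta ((1 / 6 : ℝ) : UnitAddCircle) s + expZeta ((5 / 6 : ℝ) : UnitAddCircle) s =
      ((2 : ℂ) ^ (1 - s) - 1) * ((3 : ℂ) ^ (1 - s) - 1) * riemannZeta s := by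
  have hH := hurwitzZeta_one_sixth_add_five_sixths hs
  have hE := expZeta_one_sixth_add_five_sixths hs
  refine ⟨?_, hH, hE⟩
  rw [Q, show (1 - 1 / 6 : ℝ) = 5 / 6 by norm_num]
  linear_combination hH + hE
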